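/- Let t, u, v : ℝ² → ℝ be differentiable functions with u(x,y) ≠ 0 and v(x,y) ≠ 0 for all (x,y), satisfying: ∂t/∂x = 2(2−t)/v, ∂t/∂y = −2u(t+1); ∂u/∂x = −2u/v, ∂u/∂y = (2/(3u))(t + v⁻³ − 2u³ − 1); ∂v/∂x = (2/3)(v³(t−u³) + 2), ∂v/∂y = 2uv. Define C = (1/3)((t − u³)v² − v⁻¹) and D = (1/3)v(t+1). Then in the x-direction C and D satisfy the ODE system ∂C/∂x = 4(C² + D) and ∂D/∂x = 2(CD + 1) everywhere. -/

import Mathlib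

namespace FirstIntegrals

noncomputable def firstIntegralC (t u v : ℝ) : ℝ := 1 / 3 * ((t - u ^ 3) * v ^ 2 - v⁻¹)

noncomputable def firstIntegralD (t v : ℝ) : ℝ := 1 / 3 * (v * (t + 1))

variable {T U V : ℝ → ℝ} {x : ℝ}

theorem hasDerivAt_firstIntegralC (hV0 : V x ≠ 0)
    (hT : HasDerivAt T (2 * (2 - T x) / V x) x) (hU : HasDerivAt U (-2 * U x / V x) x)
    (hV : HasDerivAt V (2 / 3 * (V x ^ 3 * (T x - U x ^ 3) + 2)) x) :
    HasDerivAt (fun s => firstIntegralC (T s) (U s) (V s))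
      (4 * (firstIntegralC (T x) (U x) (V x) ^ 2 + firstIntegralD (T x) (V x))) x := by
  refine ((((hT.sub (hU.pow 3)).mul (hV.pow 2)).sub (hV.inv hV0)).const_mul (1 / 3)).congr_deriv ?_
  simp only [firstIntegralC, firstIntegralD, Pi.sub_apply, Pi.pow_apply]
  field_simp
  ring

theorem hasDerivAt_firstIntegralD (hV0 : V x ≠ 0)
    (hT : HasDerivAt T (2 * (2 - T x) / V x) x)
    (hV : HasDerivAt V (2 / 3 * (V x ^ 3 * (T x - U x ^ 3) + 2)) x) :
    HasDerivAt (fun s => firstIntegralD (T s) (V s))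
      (2 * (firstIntegralC (T x) (U x) (V x) * firstIntegralD (T x) (V x) + 1)) x := by
  refine ((hV.mul (hT.add_const 1)).const_mul (1 / 3)).congr_deriv ?_
  simp only [firstIntegralC, firstIntegralD]
  field_simp
  ring

end FirstIntegrals

open FirstIntegrals in
theorem first_integrals_x_direction_general
    (t u v : ℝ → ℝ → ℝ)
    (hv : ∀ x y, v x y ≠ 0)
    (htx : ∀ x y, HasDerivAt (fun x' => t x' y) (2 * (2 - t x y) / v x y) x)
    (hux : ∀ x y, HasDerivAt (fun x' => u x' y) (-2 * u x y / v x y) x)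
    (hvx : ∀ x y, HasDerivAt (fun x' => v x' y)
      (2 / 3 * ((v x y) ^ 3 * (t x y - (u x y) ^ 3) + 2)) x)
    (C D : ℝ → ℝ → ℝ)
    (hC : ∀ x y, C x y = (1 / 3) * ((t x y - (u x y) ^ 3) * (v x y) ^ 2 - (v x y)⁻¹))
    (hD : ∀ x y, D x y = (1 / 3) * (v x y * (t x y + 1))) :
    (∀ x y, HasDerivAt (fun x' => C x' y) (4 * ((C x y) ^ 2 + D x y)) x) ∧
    (∀ x y, HasDerivAt (fun x' => D x' y) (2 * (C x y * D x y + 1)) x) := by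
  have hC' : C = fun x y => firstIntegralC (t x y) (u x y) (v x y) :=
    funext fun x => funext (hC x)
  have hD' : D = fun x y => firstIntegralD (t x y) (v x y) := funext fun x => funext (hD x)
  subst hC' hD'
  exact ⟨fun x y => hasDerivAt_firstIntegralC (hv x y) (htx x y) (hux x y) (hvx x y),
    fun x y => hasDerivAt_firstIntegralD (U := (u · y)) (hv x y) (htx x y) (hvx x y)⟩

/-- STATEMENT 14: If `t, u, v` satisfy the total differential system
`∂t/∂x = 2(2-t)/v`, `∂t/∂y = -2u(t+1)`, `∂u/∂x = -2u/v`,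
`∂u/∂y = (2/(3u))(t + v⁻³ - 2u³ - 1)`, `∂v/∂x = (2/3)(v³(t-u³)+2)`,
`∂v/∂y = 2uv`, with `u, v` nonvanishing, then
`C = (1/3)((t-u³)v² - v⁻¹)` and `D = (1/3)v(t+1)` satisfy the ODE system `∂C/∂x = 4(C²+D)` and `∂D/∂x = 2(CD+1)` in the `x`-direction. -/
theorem first_integrals_x_direction
    (t u v : ℝ → ℝ → ℝ)
    (hu : ∀ x y, u x y ≠ 0) (hv : ∀ x y, v x y ≠ 0)
    (htx : ∀ x y, HasDerivAt (fun x' => t x' y) (2 * (2 - t x y) / v x y) x)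
    (hty : ∀ x y, HasDerivAt (fun y' => t x y') (-2 * u x y * (t x y + 1)) y)
    (hux : ∀ x y, HasDerivAt (fun x' => u x' y) (-2 * u x y / v x y) x)
    (huy : ∀ x y, HasDerivAt (fun y' => u x y')
      (2 / (3 * u x y) * (t x y + (v x y) ^ (-3 : ℤ) - 2 * (u x y) ^ 3 - 1)) y)
    (hvx : ∀ x y, HasDerivAt (fun x' => v x' y)
      (2 / 3 * ((v x y) ^ 3 * (t x y - (u x y) ^ 3) + 2)) x)
    (hvy : ∀ x y, HasDerivAt (fun y' => v x y') (2 * u x y * v x y) y)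
    (C D : ℝ → ℝ → ℝ)
    (hC : ∀ x y, C x y = (1 / 3) * ((t x y - (u x y) ^ 3) * (v x y) ^ 2 - (v x y)⁻¹))
    (hD : ∀ x y, D x y = (1 / 3) * (v x y * (t x y + 1))) :
    (∀ x y, HasDerivAt (fun x' => C x' y) (4 * ((C x y) ^ 2 + D x y)) x) ∧
    (∀ x y, HasDerivAt (fun x' => D x' y) (2 * (C x y * D x y + 1)) x) :=
  first_integrals_x_direction_general t u v hv htx hux hvx C D hC hD
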